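/- Let A = K and let f : (∏_{s_1∈S} V_{1,s_1})^b → (∏_{s_2∈S} V_{2,s_2})^b be a T_0-equivariant nice map between bounded eigen orthonormalizable modules. Then the kernel of f is itself of the form (∏_{s∈S} Ṽ_s)^b for a sub-assignment s ↦ Ṽ_s ⊂ V_{1,s}; namely ker f = (ker(f restricted to the convergent part))^b-completion. Moreover the closure of the image of f satisfies Im(f)‾ ⊂ (Im(f)‾)^, i.e. every nonzero component of an element of the closed image lies in the closed image. -/

import Mathlib

/-!
STATEMENT 8 (Lemma `nice1`).
Over `A = K`, let `f : (∏ₛ V₁,ₛ)ᵇ → (∏ₛ V₂,ₛ)ᵇ` be a `T₀`-equivariant nice continuous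
linear map between bounded eigen orthonormalizable modules (the actions being
componentwise through unitary characters `χᵢ s`).  Then `ker f` is itself of the form
`(∏ₛ Ṽₛ)ᵇ` for a sub-assignment `s ↦ Ṽₛ ⊆ V₁,ₛ`, i.e. membership in `ker f` is a
componentwise condition; moreover the closure of the image of `f` satisfies
`Im(f)‾ ⊆ (Im(f)‾)^`: every component of an element of the closed image, viewed as a
single-index element, again lies in the closed image.
-/

noncomputable section
open Filter Topology

instance factOneLeTop : Fact ((1 : ENNReal) ≤ ⊤) := ⟨le_top⟩

variable {K : Type} [NontriviallyNormedField K]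
variable {S : Type} [DecidableEq S]
  {V1 : S → Type} [∀ s, NormedAddCommGroup (V1 s)] [∀ s, NormedSpace K (V1 s)]
  {V2 : S → Type} [∀ s, NormedAddCommGroup (V2 s)] [∀ s, NormedSpace K (V2 s)]
variable {T0 : Type} [CommGroup T0]

/-- Componentwise unitary action of `T₀` via characters. -/
def chAct {V : S → Type} [∀ s, NormedAddCommGroup (V s)] [∀ s, NormedSpace K (V s)]
    (χ : S → (T0 →* Kˣ)) (hχ1 : ∀ s t, ‖((χ s t : K))‖ = 1)
    (t : T0) (f : lp V ⊤) : lp V ⊤ := by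
  refine ⟨fun s => ((χ s t : K)) • (f : ∀ s, V s) s, memℓp_infty ?_⟩
  obtain ⟨C, hC⟩ := (lp.memℓp f).bddAbove
  refine ⟨C, ?_⟩
  rintro x ⟨s, rfl⟩
  calc ‖((χ s t : K)) • (f : ∀ s, V s) s‖ ≤ ‖((χ s t : K))‖ * ‖(f : ∀ s, V s) s‖ :=
        norm_smul_le _ _
    _ = ‖(f : ∀ s, V s) s‖ := by rw [hχ1, one_mul]
    _ ≤ C := hC ⟨s, rfl⟩

/-- Niceness of a continuous linear map between bounded products. -/
def NiceMap (f : lp V1 ⊤ →L[K] lp V2 ⊤) : Prop :=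
  ∀ (v : lp V1 ⊤) (s2 : S),
    HasSum (fun s1 : S =>
        ((f (lp.single ⊤ s1 ((v : ∀ s, V1 s) s1)) : lp V2 ⊤) : ∀ s, V2 s) s2)
      (((f v : lp V2 ⊤) : ∀ s, V2 s) s2)

/-- `lp.single` is additive. -/
theorem single_add' {V : S → Type} [∀ s, NormedAddCommGroup (V s)]
    (s : S) (x y : V s) :
    (lp.single ⊤ s (x + y) : lp V ⊤) = lp.single ⊤ s x + lp.single ⊤ s y := by
  apply lp.ext; funext j
  rw [lp.coeFn_add, Pi.add_apply]
  by_cases h : j = s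
  · subst h
    rw [lp.single_apply_self, lp.single_apply_self, lp.single_apply_self]
  · rw [lp.single_apply_ne ⊤ s _ h, lp.single_apply_ne ⊤ s _ h,
      lp.single_apply_ne ⊤ s _ h, add_zero]

/-- `lp.single` of zero is zero. -/
theorem single_zero' {V : S → Type} [∀ s, NormedAddCommGroup (V s)]
    (s : S) : (lp.single ⊤ s (0 : V s) : lp V ⊤) = 0 := by
  apply lp.ext; funext j
  rw [lp.coeFn_zero, Pi.zero_apply]
  by_cases h : j = s
  · subst h; rw [lp.single_apply_self]
  · rw [lp.single_apply_ne ⊤ s _ h]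

theorem stmt8 [CompleteSpace K]
    (χ1 χ2 : S → (T0 →* Kˣ))
    (hχ1 : ∀ s t, ‖((χ1 s t : K))‖ = 1) (hχ2 : ∀ s t, ‖((χ2 s t : K))‖ = 1)
    (hχinj1 : Function.Injective χ1) (hχinj2 : Function.Injective χ2)
    (f : lp V1 ⊤ →L[K] lp V2 ⊤)
    (hequiv : ∀ (t : T0) (v : lp V1 ⊤),
      f (chAct χ1 hχ1 t v) = chAct χ2 hχ2 t (f v))
    (hnice : NiceMap f) :
    -- the kernel is of the form `(∏ₛ Ṽₛ)ᵇ`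
    (∃ W : ∀ s, Submodule K (V1 s),
      ((LinearMap.ker (f : lp V1 ⊤ →ₗ[K] lp V2 ⊤) : Set (lp V1 ⊤)) =
        {v : lp V1 ⊤ | ∀ s, (v : ∀ s, V1 s) s ∈ W s})) ∧
    -- `Im(f)‾ ⊆ (Im(f)‾)^`
    (∀ v : lp V2 ⊤, v ∈ closure (Set.range (fun u : lp V1 ⊤ => f u)) →
      ∀ s2 : S, (lp.single ⊤ s2 ((v : ∀ s, V2 s) s2) : lp V2 ⊤) ∈
        closure (Set.range (fun u : lp V1 ⊤ => f u))) := by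
  classical
  -- Step 1: vanishing of off-eigenspace components of `f (single s1 x)`.
  have hvanish : ∀ (s1 s2 : S), χ1 s1 ≠ χ2 s2 → ∀ x : V1 s1,
      ((f (lp.single ⊤ s1 x) : lp V2 ⊤) : ∀ s, V2 s) s2 = 0 := by
    intro s1 s2 hne x
    obtain ⟨t, ht⟩ : ∃ t, χ1 s1 t ≠ χ2 s2 t := by
      by_contra h
      push_neg at h
      exact hne (MonoidHom.ext h)
    have h1 : chAct χ1 hχ1 t (lp.single ⊤ s1 x)
        = ((χ1 s1 t : K)) • (lp.single ⊤ s1 x : lp V1 ⊤) := by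
      rw [← lp.single_smul]
      apply lp.ext; funext j
      show ((χ1 j t : K)) • ((lp.single ⊤ s1 x : lp V1 ⊤) : ∀ s, V1 s) j = _
      by_cases h : j = s1
      · subst h; rw [lp.single_apply_self, lp.single_apply_self]
      · rw [lp.single_apply_ne ⊤ s1 _ h, lp.single_apply_ne ⊤ s1 _ h, smul_zero]
    have h2 := hequiv t (lp.single ⊤ s1 x)
    rw [h1, map_smul] at h2
    have h3 : ((χ1 s1 t : K)) • ((f (lp.single ⊤ s1 x) : lp V2 ⊤) : ∀ s, V2 s) s2
        = ((χ2 s2 t : K)) • ((f (lp.single ⊤ s1 x) : lp V2 ⊤) : ∀ s, V2 s) s2 := by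
      have := congrFun (congrArg (fun u : lp V2 ⊤ => (u : ∀ s, V2 s)) h2) s2
      simpa [lp.coeFn_smul, Pi.smul_apply, chAct] using this
    have hscalar : ((χ1 s1 t : K)) - ((χ2 s2 t : K)) ≠ 0 :=
      sub_ne_zero.mpr (fun h => ht (Units.ext h))
    have h4 : (((χ1 s1 t : K)) - ((χ2 s2 t : K)))
        • ((f (lp.single ⊤ s1 x) : lp V2 ⊤) : ∀ s, V2 s) s2 = 0 := by
      rw [sub_smul, h3, sub_self]
    rcases smul_eq_zero.mp h4 with h | h
    · exact absurd h hscalar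
    · exact h
  -- Step 2: component formula when the character matches.
  have hcomp : ∀ (v : lp V1 ⊤) (s2 s1 : S), χ1 s1 = χ2 s2 →
      ((f v : lp V2 ⊤) : ∀ s, V2 s) s2
        = ((f (lp.single ⊤ s1 ((v : ∀ s, V1 s) s1)) : lp V2 ⊤) : ∀ s, V2 s) s2 := by
    intro v s2 s1 heq
    refine (hnice v s2).unique (hasSum_single s1 ?_)
    intro s1' hs1'
    refine hvanish s1' s2 (fun h => hs1' (hχinj1 ?_)) _
    rw [h, heq]
  -- Step 3: components with no matching character vanish on the image.
  have hzero : ∀ (v : lp V1 ⊤) (s2 : S), (∀ s1, χ1 s1 ≠ χ2 s2) →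
      ((f v : lp V2 ⊤) : ∀ s, V2 s) s2 = 0 := by
    intro v s2 h
    refine (hnice v s2).unique ?_
    have : (fun s1 : S =>
        ((f (lp.single ⊤ s1 ((v : ∀ s, V1 s) s1)) : lp V2 ⊤) : ∀ s, V2 s) s2)
        = fun _ => (0 : V2 s2) := funext fun s1 => hvanish s1 s2 (h s1) _
    rw [this]
    exact hasSum_zero
  constructor
  · -- kernel is componentwise
    refine ⟨fun s =>
      { carrier := {x : V1 s | f (lp.single ⊤ s x) = 0}
        add_mem' := by
          intro x y hx hy
          show f (lp.single ⊤ s (x + y)) = 0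
          rw [single_add', map_add, hx, hy, add_zero]
        zero_mem' := by
          show f (lp.single ⊤ s (0 : V1 s)) = 0
          rw [single_zero', map_zero]
        smul_mem' := by
          intro c x hx
          show f (lp.single ⊤ s (c • x)) = 0
          rw [lp.single_smul, map_smul, hx, smul_zero] }, ?_⟩
    ext v
    simp only [SetLike.mem_coe, LinearMap.mem_ker, Set.mem_setOf_eq]
    constructor
    · intro hv s
      show f (lp.single ⊤ s ((v : ∀ s, V1 s) s)) = 0
      apply lp.ext; funext s2
      rw [lp.coeFn_zero, Pi.zero_apply]
      by_cases h : χ1 s = χ2 s2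
      · have h1 := hcomp v s2 s h
        have h2 : f v = 0 := hv
        rw [h2] at h1
        rw [← h1, lp.coeFn_zero, Pi.zero_apply]
      · exact hvanish s s2 h _
    · intro hv
      have hv' : ∀ s, f (lp.single ⊤ s ((v : ∀ s, V1 s) s)) = 0 := hv
      show f v = 0
      apply lp.ext; funext s2
      rw [lp.coeFn_zero, Pi.zero_apply]
      by_cases h : ∃ s1, χ1 s1 = χ2 s2
      · obtain ⟨s1, h⟩ := h
        rw [hcomp v s2 s1 h, hv' s1, lp.coeFn_zero, Pi.zero_apply]
      · push_neg at h
        exact hzero v s2 h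
  · -- closed image is componentwise
    intro v hv s2
    haveI : Nonempty S := ⟨s2⟩
    by_cases hex : ∃ s1, χ1 s1 = χ2 s2
    · obtain ⟨s1, hs1⟩ := hex
      set g : lp V2 ⊤ → lp V2 ⊤ :=
        fun u => lp.single ⊤ s2 ((u : ∀ s, V2 s) s2) with hg
      have hgsub : ∀ u w : lp V2 ⊤, g (u - w) = g u - g w := by
        intro u w
        apply lp.ext; funext j
        rw [lp.coeFn_sub, Pi.sub_apply]
        show (lp.single ⊤ s2 (((u - w : lp V2 ⊤) : ∀ s, V2 s) s2) : lp V2 ⊤) j = _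
        by_cases h : j = s2
        · subst h
          rw [lp.single_apply_self, lp.single_apply_self, lp.single_apply_self,
            lp.coeFn_sub, Pi.sub_apply]
        · rw [lp.single_apply_ne ⊤ s2 _ h, lp.single_apply_ne ⊤ s2 _ h,
            lp.single_apply_ne ⊤ s2 _ h, sub_zero]
      have hgnorm : ∀ u : lp V2 ⊤, ‖g u‖ ≤ ‖u‖ := by
        intro u
        have h1 : ‖g u‖ = ⨆ j, ‖((g u : lp V2 ⊤) : ∀ s, V2 s) j‖ :=
          lp.norm_eq_ciSup _
        rw [h1]
        refine ciSup_le fun j => ?_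
        by_cases h : j = s2
        · subst h
          show ‖(lp.single ⊤ j ((u : ∀ s, V2 s) j) : lp V2 ⊤) j‖ ≤ _
          rw [lp.single_apply_self]
          exact lp.norm_apply_le_norm ENNReal.top_ne_zero u j
        · show ‖(lp.single ⊤ s2 ((u : ∀ s, V2 s) s2) : lp V2 ⊤) j‖ ≤ _
          rw [lp.single_apply_ne ⊤ s2 _ h, norm_zero]
          exact norm_nonneg u
      have hglip : LipschitzWith 1 g := by
        refine LipschitzWith.of_dist_le_mul fun u w => ?_
        rw [dist_eq_norm, dist_eq_norm, ← hgsub, NNReal.coe_one, one_mul]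
        exact hgnorm _
      have hgcont : Continuous g := hglip.continuous
      have hmem : g v ∈ closure (g '' Set.range (fun u : lp V1 ⊤ => f u)) :=
        image_closure_subset_closure_image hgcont ⟨v, hv, rfl⟩
      refine closure_mono ?_ hmem
      rintro _ ⟨_, ⟨u, rfl⟩, rfl⟩
      refine ⟨lp.single ⊤ s1 ((u : ∀ s, V1 s) s1), ?_⟩
      show f (lp.single ⊤ s1 ((u : ∀ s, V1 s) s1))
          = lp.single ⊤ s2 (((f u : lp V2 ⊤) : ∀ s, V2 s) s2)
      apply lp.ext; funext j
      by_cases h : j = s2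
      · subst h
        rw [lp.single_apply_self, ← hcomp u j s1 hs1]
      · rw [lp.single_apply_ne ⊤ s2 _ h]
        refine hvanish s1 j (fun hc => h (hχinj2 ?_)) _
        rw [← hc, hs1]
    · push_neg at hex
      have hclosed : IsClosed {u : lp V2 ⊤ | (u : ∀ s, V2 s) s2 = 0} := by
        have hev : Continuous (fun u : lp V2 ⊤ => (u : ∀ s, V2 s) s2) := by
          refine (LipschitzWith.of_dist_le_mul (K := 1)
            (fun u w : lp V2 ⊤ => ?_)).continuous
          rw [dist_eq_norm, dist_eq_norm, NNReal.coe_one, one_mul]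
          have : (u : ∀ s, V2 s) s2 - (w : ∀ s, V2 s) s2
              = ((u - w : lp V2 ⊤) : ∀ s, V2 s) s2 := by
            rw [lp.coeFn_sub, Pi.sub_apply]
          rw [this]
          exact lp.norm_apply_le_norm ENNReal.top_ne_zero _ s2
        exact (isClosed_singleton (x := (0 : V2 s2))).preimage hev
      have hsub : Set.range (fun u : lp V1 ⊤ => f u)
          ⊆ {u : lp V2 ⊤ | (u : ∀ s, V2 s) s2 = 0} := by
        rintro _ ⟨u, rfl⟩
        exact hzero u s2 hex
      have hv0 : (v : ∀ s, V2 s) s2 = 0 :=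
        closure_minimal hsub hclosed hv
      rw [hv0, single_zero']
      exact subset_closure ⟨0, map_zero f⟩
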